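/- arXiv:1206.0423 — 2 statements merged into one kernel-verified Lean document; each statement's English description precedes it below -/
import Mathlib

section
/- For α ∈ (0,1) and ξ ∈ ℝ with ξ ≠ 0, one has ∫_0^∞ sin(ξ z) / z^{1+α} dz = −Γ(−α) sin(πα/2) · sgn(ξ) · |ξ|^α, where Γ(−α) = Γ(2−α)/((−α)(1−α)) < 0. -/
open Real

set_option maxHeartbeats 1000000

section Aux

open Set MeasureTheory Filter Topology

-- Step A: Laplace transform of sine
lemma expSinInt {t : ℝ} (ξ : ℝ) (ht : 0 < t) :
    ∫ z in Ioi (0:ℝ), Real.exp (-(t*z)) * Real.sin (ξ*z) = ξ / (t^2 + ξ^2) := by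
  have hden : (0:ℝ) < t^2 + ξ^2 := by positivity
  set F : ℝ → ℝ := fun z =>
    -(Real.exp (-(t*z)) * (t * Real.sin (ξ*z) + ξ * Real.cos (ξ*z))) / (t^2+ξ^2) with hF
  have hderiv : ∀ z ∈ Ioi (0:ℝ), HasDerivAt F (Real.exp (-(t*z)) * Real.sin (ξ*z)) z := by
    intro z _
    have h0 : HasDerivAt (fun z : ℝ => -(t*z)) (-t) z := by
      simpa [Pi.neg_def] using ((hasDerivAt_id z).const_mul t).neg
    have he := h0.exp
    have hs : HasDerivAt (fun z : ℝ => Real.sin (ξ*z)) (Real.cos (ξ*z) * ξ) z := by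
      simpa using ((hasDerivAt_id z).const_mul ξ).sin
    have hc : HasDerivAt (fun z : ℝ => Real.cos (ξ*z)) (-Real.sin (ξ*z) * ξ) z := by
      simpa using ((hasDerivAt_id z).const_mul ξ).cos
    have hG := (he.mul ((hs.const_mul t).add (hc.const_mul ξ))).neg.div_const (t^2+ξ^2)
    refine hG.congr_deriv ?_
    field_simp
    simp only [Pi.add_apply]
    ring
  have hint : IntegrableOn (fun z => Real.exp (-(t*z)) * Real.sin (ξ*z)) (Ioi (0:ℝ)) := by
    have hg : IntegrableOn (fun z : ℝ => Real.exp (-(t*z))) (Ioi (0:ℝ)) := by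
      simpa [neg_mul] using exp_neg_integrableOn_Ioi 0 ht
    refine hg.mono' ?_ ?_
    · exact ((Real.continuous_exp.comp (continuous_const.mul continuous_id).neg).mul
        (Real.continuous_sin.comp (continuous_const.mul continuous_id))).aestronglyMeasurable
    · filter_upwards with z
      rw [norm_mul, Real.norm_eq_abs, Real.norm_eq_abs, Real.abs_exp]
      nth_rewrite 2 [← mul_one (Real.exp (-(t*z)))]
      exact mul_le_mul_of_nonneg_left (Real.abs_sin_le_one _) (Real.exp_pos _).le
  have htend : Tendsto F atTop (𝓝 0) := by
    apply squeeze_zero_norm (a := fun z => Real.exp (-(t*z)) * ((|t| + |ξ|)/(t^2+ξ^2)))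
    · intro z
      rw [hF]
      rw [Real.norm_eq_abs, abs_div, abs_of_pos hden, abs_neg, abs_mul, Real.abs_exp,
        div_le_iff₀ hden]
      rw [mul_assoc, div_mul_cancel₀ _ hden.ne']
      apply mul_le_mul_of_nonneg_left _ (Real.exp_pos _).le
      calc |t * Real.sin (ξ*z) + ξ * Real.cos (ξ*z)|
          ≤ |t * Real.sin (ξ*z)| + |ξ * Real.cos (ξ*z)| := abs_add_le _ _
        _ ≤ |t| * 1 + |ξ| * 1 := by
            rw [abs_mul, abs_mul]
            gcongr
            · exact Real.abs_sin_le_one _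
            · exact Real.abs_cos_le_one _
        _ = |t| + |ξ| := by ring
    · have h1 : Tendsto (fun z : ℝ => t * z) atTop atTop :=
        Tendsto.const_mul_atTop ht tendsto_id
      have := (Real.tendsto_exp_neg_atTop_nhds_zero.comp h1).mul_const ((|t| + |ξ|)/(t^2+ξ^2))
      simpa using this
  have := integral_Ioi_of_hasDerivAt_of_tendsto
    (f := F) (f' := fun z => Real.exp (-(t*z)) * Real.sin (ξ*z)) (a := 0)
    (by
      apply Continuous.continuousWithinAt
      rw [hF]
      fun_prop)
    hderiv hint htend
  rw [this, hF]
  simp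
  field_simp

lemma crux {α : ℝ} (ξ : ℝ) (hα0 : 0 < α) (hα1 : α < 1) :
    IntegrableOn (fun z => |Real.sin (ξ*z)| * (1/z)^(1+α)) (Ioi (0:ℝ)) := by
  have hmeas : Measurable (fun z : ℝ => |Real.sin (ξ*z)| * (1/z)^(1+α)) := by
    fun_prop
  have h1 : IntegrableOn (fun z => |Real.sin (ξ*z)| * (1/z)^(1+α)) (Ioc (0:ℝ) 1) := by
    have hg : IntegrableOn (fun z : ℝ => |ξ| * z^(-α)) (Ioc (0:ℝ) 1) := by
      have := intervalIntegral.intervalIntegrable_rpow' (a := 0) (b := 1)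
        (r := -α) (by linarith)
      rw [intervalIntegrable_iff_integrableOn_Ioc_of_le zero_le_one] at this
      exact this.const_mul _
    refine hg.mono' (hmeas.aestronglyMeasurable.restrict) ?_
    filter_upwards [ae_restrict_mem measurableSet_Ioc] with z hz
    obtain ⟨hz0, hz1⟩ := hz
    rw [Real.norm_eq_abs, abs_mul, abs_abs, abs_of_nonneg (Real.rpow_nonneg (by positivity) _)]
    have hsin : |Real.sin (ξ*z)| ≤ |ξ| * z := by
      calc |Real.sin (ξ*z)| ≤ |ξ*z| := Real.abs_sin_le_abs
        _ = |ξ| * z := by rw [abs_mul, abs_of_pos hz0]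
    calc |Real.sin (ξ*z)| * (1/z)^(1+α) ≤ (|ξ| * z) * (1/z)^(1+α) := by
          exact mul_le_mul_of_nonneg_right hsin (Real.rpow_nonneg (by positivity) _)
      _ = |ξ| * z^(-α) := by
          rw [one_div, Real.inv_rpow hz0.le,
            show -α = 1 - (1+α) by ring, Real.rpow_sub hz0, Real.rpow_one,
            div_eq_mul_inv]
          ring
  have h2 : IntegrableOn (fun z => |Real.sin (ξ*z)| * (1/z)^(1+α)) (Ioi (1:ℝ)) := by
    have hg : IntegrableOn (fun z : ℝ => z^(-(1+α))) (Ioi (1:ℝ)) :=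
      integrableOn_Ioi_rpow_of_lt (by linarith) one_pos
    refine hg.mono' (hmeas.aestronglyMeasurable.restrict) ?_
    filter_upwards [ae_restrict_mem measurableSet_Ioi] with z hz
    rw [mem_Ioi] at hz
    have hz0 : (0:ℝ) < z := lt_trans one_pos hz
    rw [Real.norm_eq_abs, abs_mul, abs_abs, abs_of_nonneg (Real.rpow_nonneg (by positivity) _),
      one_div, Real.inv_rpow hz0.le, ← Real.rpow_neg hz0.le]
    nth_rewrite 2 [← one_mul (z ^ (-(1+α)))]
    exact mul_le_mul_of_nonneg_right (Real.abs_sin_le_one _) (Real.rpow_nonneg hz0.le _)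
  have := h1.union h2
  rwa [Ioc_union_Ioi_eq_Ioi zero_le_one] at this

lemma expInt {r : ℝ} (hr : 0 < r) :
    ∫ s in Ioi (0:ℝ), Real.exp (-(r*s)) = r⁻¹ := by
  have := Real.integral_rpow_mul_exp_neg_mul_Ioi one_pos hr
  simpa [Real.rpow_one, sub_self, Real.rpow_zero, Real.Gamma_one] using this

lemma gaussInt {α : ℝ} (hα0 : 0 < α) {s : ℝ} (hs : 0 < s) :
    ∫ u in Ioi (0:ℝ), u^α * Real.exp (-(s*u^2))
      = s^(-(α+1)/2) * (1/2) * Real.Gamma ((α+1)/2) := by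
  have := integral_rpow_mul_exp_neg_mul_rpow (p := 2) (q := α) (b := s)
    two_pos (by linarith) hs
  simp_rw [show ((2:ℝ)) = ((2:ℕ):ℝ) by norm_num, Real.rpow_natCast, neg_mul] at this
  simpa using this

lemma lebBeta {α : ℝ} (hα0 : 0 < α) (hα1 : α < 1) :
    IntegrableOn (fun u : ℝ => u^α * (u^2+1)⁻¹) (Ioi (0:ℝ)) := by
  have hmeas : Measurable (fun u : ℝ => u^α * (u^2+1)⁻¹) := by fun_prop
  have h1 : IntegrableOn (fun u : ℝ => u^α * (u^2+1)⁻¹) (Ioc (0:ℝ) 1) := by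
    have hg : IntegrableOn (fun _ : ℝ => (1:ℝ)) (Ioc (0:ℝ) 1) :=
      integrableOn_const measure_Ioc_lt_top.ne
    refine hg.mono' hmeas.aestronglyMeasurable.restrict ?_
    filter_upwards [ae_restrict_mem measurableSet_Ioc] with u hu
    obtain ⟨hu0, hu1⟩ := hu
    have h2 : (0:ℝ) < u^2+1 := by positivity
    rw [Real.norm_eq_abs, abs_mul, abs_of_nonneg (Real.rpow_nonneg hu0.le _),
      abs_of_nonneg (inv_nonneg.mpr h2.le)]
    have ha : u^α ≤ 1 := Real.rpow_le_one hu0.le hu1 hα0.le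
    have hb : (u^2+1)⁻¹ ≤ 1 := by
      rw [inv_le_one_iff₀]
      right; nlinarith
    calc u^α * (u^2+1)⁻¹ ≤ 1 * 1 := by
          apply mul_le_mul ha hb (inv_nonneg.mpr h2.le) zero_le_one
      _ = 1 := by norm_num
  have h2 : IntegrableOn (fun u : ℝ => u^α * (u^2+1)⁻¹) (Ioi (1:ℝ)) := by
    have hg : IntegrableOn (fun u : ℝ => u^(α-2)) (Ioi (1:ℝ)) :=
      integrableOn_Ioi_rpow_of_lt (by linarith) one_pos
    refine hg.mono' hmeas.aestronglyMeasurable.restrict ?_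
    filter_upwards [ae_restrict_mem measurableSet_Ioi] with u hu
    rw [mem_Ioi] at hu
    have hu0 : (0:ℝ) < u := lt_trans one_pos hu
    have h2 : (0:ℝ) < u^2+1 := by positivity
    rw [Real.norm_eq_abs, abs_mul, abs_of_nonneg (Real.rpow_nonneg hu0.le _),
      abs_of_nonneg (inv_nonneg.mpr h2.le)]
    calc u^α * (u^2+1)⁻¹ ≤ u^α * (u^2)⁻¹ := by
          gcongr
          nlinarith
      _ = u^(α-2) := by
          rw [Real.rpow_sub hu0, div_eq_mul_inv]
          congr 1
          rw [show (2:ℝ) = ((2:ℕ):ℝ) by norm_num, Real.rpow_natCast]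
  have := h1.union h2
  rwa [Ioc_union_Ioi_eq_Ioi zero_le_one] at this

lemma betaInt {α : ℝ} (hα0 : 0 < α) (hα1 : α < 1) :
    ∫ u in Ioi (0:ℝ), u^α * (u^2+1)⁻¹
      = Real.Gamma ((α+1)/2) * Real.Gamma ((1-α)/2) / 2 := by
  have hγ : (0:ℝ) < (1-α)/2 := by linarith
  have hmeas : AEStronglyMeasurable
      (fun p : ℝ × ℝ => p.1^α * Real.exp (-((p.1^2+1)*p.2)))
      ((volume.restrict (Ioi (0:ℝ))).prod (volume.restrict (Ioi (0:ℝ)))) := by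
    apply Measurable.aestronglyMeasurable
    fun_prop
  have hInt : Integrable
      (fun p : ℝ × ℝ => p.1^α * Real.exp (-((p.1^2+1)*p.2)))
      ((volume.restrict (Ioi (0:ℝ))).prod (volume.restrict (Ioi (0:ℝ)))) := by
    rw [integrable_prod_iff hmeas]
    constructor
    · filter_upwards [ae_restrict_mem measurableSet_Ioi] with u hu
      rw [mem_Ioi] at hu
      have : IntegrableOn (fun s : ℝ => Real.exp (-((u^2+1)*s))) (Ioi (0:ℝ)) := by
        simpa only [neg_mul] using
          exp_neg_integrableOn_Ioi 0 (by positivity : (0:ℝ) < u^2+1)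
      exact this.const_mul _
    · apply ((lebBeta hα0 hα1).congr)
      filter_upwards [ae_restrict_mem measurableSet_Ioi] with u hu
      rw [mem_Ioi] at hu
      have h0 : ∀ s ∈ Ioi (0:ℝ),
          ‖u^α * Real.exp (-((u^2+1)*s))‖ = u^α * Real.exp (-((u^2+1)*s)) := by
        intro s _
        rw [Real.norm_eq_abs, abs_of_nonneg (by positivity)]
      rw [setIntegral_congr_fun measurableSet_Ioi h0, integral_const_mul,
        expInt (by positivity : (0:ℝ) < u^2+1)]
  have hswap := integral_integral_swap
    (f := fun u s => u^α * Real.exp (-((u^2+1)*s))) hInt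
  have lhs : ∫ u in Ioi (0:ℝ), ∫ s in Ioi (0:ℝ), u^α * Real.exp (-((u^2+1)*s))
      = ∫ u in Ioi (0:ℝ), u^α * (u^2+1)⁻¹ := by
    refine setIntegral_congr_fun measurableSet_Ioi (fun u hu => ?_)
    rw [mem_Ioi] at hu
    rw [integral_const_mul, expInt (by positivity : (0:ℝ) < u^2+1)]
  have rhs : ∫ s in Ioi (0:ℝ), ∫ u in Ioi (0:ℝ), u^α * Real.exp (-((u^2+1)*s))
      = Real.Gamma ((α+1)/2) * Real.Gamma ((1-α)/2) / 2 := by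
    have step : ∀ s ∈ Ioi (0:ℝ),
        ∫ u in Ioi (0:ℝ), u^α * Real.exp (-((u^2+1)*s))
          = (Real.Gamma ((α+1)/2) / 2) * (Real.exp (-s) * s^((1-α)/2-1)) := by
      intro s hs
      rw [mem_Ioi] at hs
      have h1 : ∀ u ∈ Ioi (0:ℝ),
          u^α * Real.exp (-((u^2+1)*s))
            = Real.exp (-s) * (u^α * Real.exp (-(s*u^2))) := by
        intro u _
        rw [show -((u^2+1)*s) = -s + -(s*u^2) by ring, Real.exp_add]
        ring
      rw [setIntegral_congr_fun measurableSet_Ioi h1, integral_const_mul,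
        gaussInt hα0 hs]
      rw [show -(α+1)/2 = (1-α)/2 - 1 by ring]
      ring
    rw [setIntegral_congr_fun measurableSet_Ioi step, integral_const_mul]
    rw [← Real.Gamma_eq_integral hγ]
    ring
  rw [← lhs, hswap, rhs]

lemma swapMain {α : ℝ} (ξ : ℝ) (hα0 : 0 < α) (hα1 : α < 1) :
    ∫ z in Ioi (0:ℝ), Real.sin (ξ*z) / z^(1+α)
      = (∫ t in Ioi (0:ℝ), t^α * (ξ/(t^2+ξ^2))) / Real.Gamma (1+α) := by
  have hG : 0 < Real.Gamma (1+α) := Real.Gamma_pos_of_pos (by linarith)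
  have key : ∀ z : ℝ, 0 < z →
      ∫ t in Ioi (0:ℝ), t^α * Real.exp (-(z*t)) = (1/z)^(1+α) * Real.Gamma (1+α) := by
    intro z hz
    have := Real.integral_rpow_mul_exp_neg_mul_Ioi (show (0:ℝ) < 1+α by linarith) hz
    simpa [show (1:ℝ)+α-1 = α by ring] using this
  have slice : ∀ z : ℝ, 0 < z →
      IntegrableOn (fun t => t^α * Real.exp (-(z*t))) (Ioi (0:ℝ)) := by
    intro z hz
    simpa [Real.rpow_one, neg_mul] using
      integrableOn_rpow_mul_exp_neg_mul_rpow (by linarith : (-1:ℝ) < α) one_pos hz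
  have hmeas : AEStronglyMeasurable
      (fun p : ℝ × ℝ => Real.sin (ξ*p.1) * (p.2^α * Real.exp (-(p.1*p.2))))
      ((volume.restrict (Ioi (0:ℝ))).prod (volume.restrict (Ioi (0:ℝ)))) := by
    apply Measurable.aestronglyMeasurable
    fun_prop
  have hInt : Integrable
      (fun p : ℝ × ℝ => Real.sin (ξ*p.1) * (p.2^α * Real.exp (-(p.1*p.2))))
      ((volume.restrict (Ioi (0:ℝ))).prod (volume.restrict (Ioi (0:ℝ)))) := by
    rw [integrable_prod_iff hmeas]
    constructor
    · filter_upwards [ae_restrict_mem measurableSet_Ioi] with z hz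
      exact ((slice z hz).const_mul _)
    · apply (((crux ξ hα0 hα1).mul_const (Real.Gamma (1+α))).congr)
      filter_upwards [ae_restrict_mem measurableSet_Ioi] with z hz
      have h0 : ∀ t ∈ Ioi (0:ℝ),
          ‖Real.sin (ξ*z) * (t^α * Real.exp (-(z*t)))‖
            = |Real.sin (ξ*z)| * (t^α * Real.exp (-(z*t))) := by
        intro t ht
        rw [mem_Ioi] at ht
        rw [Real.norm_eq_abs, abs_mul,
          abs_of_nonneg (by positivity : (0:ℝ) ≤ t^α * Real.exp (-(z*t)))]
      rw [setIntegral_congr_fun measurableSet_Ioi h0, integral_const_mul, key z hz]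
      ring
  have hswap := integral_integral_swap
    (f := fun z t => Real.sin (ξ*z) * (t^α * Real.exp (-(z*t)))) hInt
  calc ∫ z in Ioi (0:ℝ), Real.sin (ξ*z) / z^(1+α)
      = ∫ z in Ioi (0:ℝ),
          (∫ t in Ioi (0:ℝ), Real.sin (ξ*z) * (t^α * Real.exp (-(z*t))))
            / Real.Gamma (1+α) := by
        refine setIntegral_congr_fun measurableSet_Ioi (fun z hz => ?_)
        rw [mem_Ioi] at hz
        rw [integral_const_mul, key z hz, one_div, Real.inv_rpow hz.le]
        field_simp
    _ = (∫ z in Ioi (0:ℝ), ∫ t in Ioi (0:ℝ),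
          Real.sin (ξ*z) * (t^α * Real.exp (-(z*t)))) / Real.Gamma (1+α) :=
        integral_div _ _
    _ = (∫ t in Ioi (0:ℝ), ∫ z in Ioi (0:ℝ),
          Real.sin (ξ*z) * (t^α * Real.exp (-(z*t)))) / Real.Gamma (1+α) := by
              rw [hswap]
    _ = (∫ t in Ioi (0:ℝ), t^α * (ξ/(t^2+ξ^2))) / Real.Gamma (1+α) := by
        congr 1
        refine setIntegral_congr_fun measurableSet_Ioi (fun t ht => ?_)
        rw [mem_Ioi] at ht
        have h1 : ∀ z ∈ Ioi (0:ℝ),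
            Real.sin (ξ*z) * (t^α * Real.exp (-(z*t)))
              = t^α * (Real.exp (-(t*z)) * Real.sin (ξ*z)) := by
          intro z _
          rw [mul_comm z t]
          ring
        rw [setIntegral_congr_fun measurableSet_Ioi h1, integral_const_mul, expSinInt ξ ht]

lemma scaleInt {α : ℝ} {ξ : ℝ} (hξ : ξ ≠ 0) (hα0 : 0 < α) (hα1 : α < 1) :
    ∫ t in Ioi (0:ℝ), t^α * (ξ/(t^2+ξ^2))
      = Real.sign ξ * |ξ|^α * ∫ u in Ioi (0:ℝ), u^α * (u^2+1)⁻¹ := by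
  set b := |ξ| with hbdef
  have hb : 0 < b := abs_pos.mpr hξ
  have h := integral_comp_mul_left_Ioi (fun t => t^α * (ξ/(t^2+ξ^2))) 0 hb
  rw [mul_zero, smul_eq_mul] at h
  have h2 : ∀ x ∈ Ioi (0:ℝ),
      (b*x)^α * (ξ/((b*x)^2+ξ^2))
        = (Real.sign ξ * b^α * b⁻¹) * (x^α * (x^2+1)⁻¹) := by
    intro x hx
    rw [mem_Ioi] at hx
    have hx1 : (0:ℝ) < x^2+1 := by positivity
    rw [Real.mul_rpow hb.le hx.le]
    have hξb : ξ = Real.sign ξ * b := by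
      rcases lt_or_gt_of_ne hξ with hlt|hgt
      · rw [Real.sign_of_neg hlt, hbdef, abs_of_neg hlt]; ring
      · rw [Real.sign_of_pos hgt, hbdef, abs_of_pos hgt]; ring
    have hsq : (b*x)^2 + ξ^2 = b^2 * (x^2+1) := by
      rw [hbdef, mul_pow, sq_abs]; ring
    rw [hsq]
    nth_rewrite 1 [hξb]
    field_simp
  rw [setIntegral_congr_fun measurableSet_Ioi h2, integral_const_mul] at h
  field_simp at h ⊢
  rw [h]
  congr 1
  ext t
  ring

theorem stable_sine_integral (α : ℝ) (hα : α ∈ Set.Ioo (0:ℝ) 1) (ξ : ℝ) (hξ : ξ ≠ 0) :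
    (∫ z in Set.Ioi (0:ℝ), Real.sin (ξ * z) / z ^ (1 + α))
      = -(Real.Gamma (-α)) * Real.sin (Real.pi * α / 2) * Real.sign ξ * |ξ| ^ α ∧
    Real.Gamma (-α) = Real.Gamma (2 - α) / ((-α) * (1 - α)) ∧
    Real.Gamma (-α) < 0 := by
  obtain ⟨hα0, hα1⟩ := hα
  have hΓ1 : 0 < Real.Gamma (1+α) := Real.Gamma_pos_of_pos (by linarith)
  have hc : 0 < Real.cos (π*α/2) := by
    apply Real.cos_pos_of_mem_Ioo
    constructor
    · nlinarith [Real.pi_pos]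
    · nlinarith [Real.pi_pos]
  have hs : 0 < Real.sin (π*α/2) := by
    apply Real.sin_pos_of_pos_of_lt_pi
    · positivity
    · nlinarith [Real.pi_pos]
  have hsin2 : Real.sin (π*α) = 2 * Real.sin (π*α/2) * Real.cos (π*α/2) := by
    have := Real.sin_two_mul (π*α/2)
    rw [show 2*(π*α/2) = π*α by ring] at this
    exact this
  have hsinpos : 0 < Real.sin (π*α) := by rw [hsin2]; positivity
  have hrefl : Real.Gamma (-α) * Real.Gamma (1+α) = -(π / Real.sin (π*α)) := by
    have := Real.Gamma_mul_Gamma_one_sub (-α)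
    rw [show (1:ℝ) - -α = 1+α by ring] at this
    rw [this, mul_neg, Real.sin_neg, div_neg]
  have hΓneg : Real.Gamma (-α) = -(π / (Real.sin (π*α) * Real.Gamma (1+α))) := by
    field_simp at hrefl ⊢
    linarith
  have part3 : Real.Gamma (-α) < 0 := by
    rw [hΓneg, neg_lt_zero]
    positivity
  refine ⟨?_, ?_, part3⟩
  · have hβγ : Real.Gamma ((α+1)/2) * Real.Gamma ((1-α)/2) = π / Real.cos (π*α/2) := by
      have := Real.Gamma_mul_Gamma_one_sub ((α+1)/2)
      rw [show (1:ℝ) - (α+1)/2 = (1-α)/2 by ring] at this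
      rw [this, show π * ((α+1)/2) = π*α/2 + π/2 by ring, Real.sin_add_pi_div_two]
    rw [swapMain ξ hα0 hα1, scaleInt hξ hα0 hα1, betaInt hα0 hα1, hβγ, hΓneg, hsin2]
    field_simp
  · have h1 : Real.Gamma (-α+1) = -α * Real.Gamma (-α) :=
      Real.Gamma_add_one (neg_ne_zero.mpr hα0.ne')
    have h2 : Real.Gamma ((1-α)+1) = (1-α) * Real.Gamma (1-α) :=
      Real.Gamma_add_one (by linarith)
    rw [show (-α)+1 = 1-α by ring] at h1
    rw [show (1-α)+1 = 2-α by ring] at h2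
    rw [h2, h1, eq_div_iff (by
      intro hzero
      rcases mul_eq_zero.mp hzero with h|h
      · exact hα0.ne' (by linarith)
      · linarith)]
    ring

end Aux
end

section
/- Let A, B ∈ ℝ^{d×n} and let K ∈ ℂ^{n×n} satisfy |Kz| ≤ |z| for all z ∈ ℂⁿ. Define m(ξ) = [e^{−|Aᵀξ−Bᵀξ|²} − e^{−|Aᵀξ|²−|Bᵀξ|²}] · ⟨Aᵀξ, K Bᵀξ⟩ / ⟨Aᵀξ, Bᵀξ⟩ when ⟨Aᵀξ, Bᵀξ⟩ ≠ 0, and m(ξ) = e^{−|Aᵀξ|²−|Bᵀξ|²} ⟨Aᵀξ, K Bᵀξ⟩ otherwise. Then |m(ξ)| ≤ 1 for all ξ ∈ ℝ^d. -/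
open Matrix

noncomputable def ip {n : ℕ} (x y : Fin n → ℝ) : ℝ := ∑ i, x i * y i

noncomputable def nsq {n : ℕ} (x : Fin n → ℝ) : ℝ := ∑ i, x i ^ 2

/-- Bilinear pairing of a real vector with a complex vector. -/
noncomputable def pairC {n : ℕ} (x : Fin n → ℝ) (w : Fin n → ℂ) : ℂ :=
  ∑ i, (x i : ℂ) * w i

-- convexity step: for 0 ≤ s ≤ c, 0 < c : c*(e^{2s}-1) ≤ s*(e^{2c}-1)
lemma step_pos {s c : ℝ} (hs : 0 ≤ s) (hc : 0 < c) (hsc : s ≤ c) :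
    c * (Real.exp (2*s) - 1) ≤ s * (Real.exp (2*c) - 1) := by
  have ha1 : (0:ℝ) ≤ 1 - s/c := by
    have : s/c ≤ 1 := (div_le_one hc).2 hsc; linarith
  have ha2 : (0:ℝ) ≤ s/c := by positivity
  have ha3 : (1 - s/c) + s/c = 1 := by ring
  have hconv := convexOn_exp.2 (Set.mem_univ (0:ℝ)) (Set.mem_univ (2*c)) ha1 ha2 ha3
  have h0 : (1 - s/c) • (0:ℝ) + (s/c) • (2*c) = 2*s := by
    simp only [smul_eq_mul, mul_zero, zero_add]; rw [div_mul_eq_mul_div, div_eq_iff hc.ne']; ring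
  rw [h0] at hconv
  have key : Real.exp (2*s) ≤ (1 - s/c) * 1 + s/c * Real.exp (2*c) := by
    simpa [Real.exp_zero, smul_eq_mul] using hconv
  have key2 : c * Real.exp (2*s) ≤ (c - s) + s * Real.exp (2*c) := by
    have h := mul_le_mul_of_nonneg_left key hc.le
    have e : c * ((1 - s/c)*1 + s/c * Real.exp (2*c)) = (c - s) + s * Real.exp (2*c) := by
      field_simp
    rw [e] at h
    exact h
  linarith

lemma step1 {s c : ℝ} (hc : 0 < c) (h : |s| ≤ c) :
    |Real.exp (2*s) - 1| * c ≤ |s| * (Real.exp (2*c) - 1) := by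
  rcases le_or_gt 0 s with hs | hs
  · rw [abs_of_nonneg hs, abs_of_nonneg (by nlinarith [Real.add_one_le_exp (2*s)] :
      (0:ℝ) ≤ Real.exp (2*s) - 1)]
    have := step_pos hs hc (by rwa [abs_of_nonneg hs] at h)
    linarith
  · rw [abs_of_neg hs, abs_of_nonpos (by nlinarith [Real.exp_le_exp.2 (by linarith : 2*s ≤ 0),
      Real.exp_zero] : Real.exp (2*s) - 1 ≤ 0)]
    have h1 : 1 - Real.exp (2*s) ≤ -(2*s) := by nlinarith [Real.add_one_le_exp (2*s)]
    have h2 : 2*c ≤ Real.exp (2*c) - 1 := by nlinarith [Real.add_one_le_exp (2*c)]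
    nlinarith

lemma key1 {a b s : ℝ} (ha : 0 ≤ a) (hb : 0 ≤ b) (hs : s ≠ 0)
    (hsc : |s| ≤ Real.sqrt a * Real.sqrt b) :
    Real.exp (-a-b) * |Real.exp (2*s) - 1| * (Real.sqrt a * Real.sqrt b) / |s| ≤ 1 := by
  set c := Real.sqrt a * Real.sqrt b with hc
  have hs0 : 0 < |s| := abs_pos.2 hs
  have hcpos : 0 < c := lt_of_lt_of_le hs0 hsc
  have h1 := step1 hcpos hsc
  have h2c : 2*c ≤ a + b := by
    nlinarith [sq_nonneg (Real.sqrt a - Real.sqrt b), Real.sq_sqrt ha, Real.sq_sqrt hb]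
  have h2 : Real.exp (-a-b) * (Real.exp (2*c) - 1) ≤ 1 := by
    have e1 : Real.exp (-a-b) * Real.exp (2*c) = Real.exp (2*c - a - b) := by
      rw [← Real.exp_add]; ring_nf
    have e2 : Real.exp (2*c - a - b) ≤ 1 := Real.exp_le_one_iff.2 (by linarith)
    nlinarith [Real.exp_pos (-a-b)]
    -- exp(-a-b)*(e^{2c}-1) = e^{2c-a-b} - e^{-a-b} ≤ 1 - 0
  rw [div_le_one hs0]
  calc Real.exp (-a-b) * |Real.exp (2*s) - 1| * c
      ≤ Real.exp (-a-b) * (|s| * (Real.exp (2*c) - 1)) := by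
        have := mul_le_mul_of_nonneg_left h1 (Real.exp_pos (-a-b)).le
        linarith [this, mul_assoc (Real.exp (-a-b)) (|Real.exp (2*s) - 1|) c]
    _ = |s| * (Real.exp (-a-b) * (Real.exp (2*c) - 1)) := by ring
    _ ≤ |s| * 1 := by exact mul_le_mul_of_nonneg_left h2 hs0.le
    _ = |s| := mul_one _

lemma key2 {a b : ℝ} (ha : 0 ≤ a) (hb : 0 ≤ b) :
    Real.exp (-a-b) * (Real.sqrt a * Real.sqrt b) ≤ 1 := by
  have h2c : 2*(Real.sqrt a * Real.sqrt b) ≤ a + b := by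
    nlinarith [sq_nonneg (Real.sqrt a - Real.sqrt b), Real.sq_sqrt ha, Real.sq_sqrt hb]
  have h1 : Real.exp (-a-b) * Real.exp (a+b) = 1 := by
    rw [← Real.exp_add]; ring_nf; exact Real.exp_zero
  have h2 := Real.add_one_le_exp (a+b)
  have h3 : 0 ≤ Real.sqrt a * Real.sqrt b := by positivity
  nlinarith [Real.exp_pos (-a-b)]

lemma pairC_le {n : ℕ} (x : Fin n → ℝ) (w : Fin n → ℂ) :
    ‖pairC x w‖ ≤ Real.sqrt (nsq x) * Real.sqrt (∑ i, ‖w i‖^2) := by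
  have h1 : ‖pairC x w‖ ≤ ∑ i, |x i| * ‖w i‖ := by
    refine (norm_sum_le _ _).trans ?_
    apply Finset.sum_le_sum
    intro i _
    rw [norm_mul]
    simp
  refine h1.trans ?_
  have := Real.sum_mul_le_sqrt_mul_sqrt Finset.univ (fun i => |x i|) (fun i => ‖w i‖)
  simpa [nsq, sq_abs] using this

lemma ip_le {n : ℕ} (x y : Fin n → ℝ) :
    |ip x y| ≤ Real.sqrt (nsq x) * Real.sqrt (nsq y) := by
  have h1 := Real.sum_mul_le_sqrt_mul_sqrt Finset.univ (fun i => |x i|) (fun i => |y i|)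
  have h2 : |ip x y| ≤ ∑ i, |x i| * |y i| := by
    refine (Finset.abs_sum_le_sum_abs _ _).trans ?_
    apply le_of_eq
    exact Finset.sum_congr rfl fun i _ => abs_mul _ _
  refine h2.trans ?_
  simpa [nsq, sq_abs] using h1

theorem gaussian_symbol_bounded_by_one {d n : ℕ}
    (A B : Matrix (Fin d) (Fin n) ℝ) (K : Matrix (Fin n) (Fin n) ℂ)
    (hK : ∀ z : Fin n → ℂ,
      Real.sqrt (∑ i, ‖K.mulVec z i‖ ^ 2) ≤ Real.sqrt (∑ i, ‖z i‖ ^ 2)) :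
    ∀ ξ : Fin d → ℝ,
      Norm.norm
        (if ip (Aᵀ.mulVec ξ) (Bᵀ.mulVec ξ) ≠ 0 then
          (Complex.exp (-(nsq (Aᵀ.mulVec ξ - Bᵀ.mulVec ξ) : ℂ)) -
            Complex.exp (-(nsq (Aᵀ.mulVec ξ) : ℂ) - (nsq (Bᵀ.mulVec ξ) : ℂ))) *
            pairC (Aᵀ.mulVec ξ) (K.mulVec fun i => ((Bᵀ.mulVec ξ) i : ℂ)) /
            ((ip (Aᵀ.mulVec ξ) (Bᵀ.mulVec ξ) : ℝ) : ℂ)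
        else
          Complex.exp (-(nsq (Aᵀ.mulVec ξ) : ℂ) - (nsq (Bᵀ.mulVec ξ) : ℂ)) *
            pairC (Aᵀ.mulVec ξ) (K.mulVec fun i => ((Bᵀ.mulVec ξ) i : ℂ))) ≤ 1 := by
  intro ξ
  set u := Aᵀ.mulVec ξ with hu
  set v := Bᵀ.mulVec ξ with hv
  set a := nsq u with hadef
  set b := nsq v with hbdef
  set s := ip u v with hsdef
  have ha : 0 ≤ a := Finset.sum_nonneg fun i _ => sq_nonneg _
  have hb : 0 ≤ b := Finset.sum_nonneg fun i _ => sq_nonneg _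
  -- pairC bound
  have hw : (∑ i, ‖((v i : ℂ))‖^2) = b := by
    simp [hbdef, nsq, Complex.norm_real, sq_abs]
  have hP : ‖pairC u (K.mulVec fun i => ((v i : ℂ)))‖ ≤
      Real.sqrt a * Real.sqrt b := by
    refine (pairC_le u _).trans ?_
    have h := hK (fun i => ((v i : ℂ)))
    rw [hw] at h
    exact mul_le_mul_of_nonneg_left h (Real.sqrt_nonneg _)
  have hCS : |s| ≤ Real.sqrt a * Real.sqrt b := ip_le u v
  -- parallelogram-type identity
  have hpar : nsq (u - v) = a - 2*s + b := by
    have hx : ∀ x, (u x - v x)^2 = u x^2 - 2*(u x * v x) + v x^2 := fun x => by ring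
    simp only [nsq, hadef, hbdef, hsdef, ip, Pi.sub_apply]
    rw [Finset.sum_congr rfl (fun x _ => hx x), Finset.sum_add_distrib,
      Finset.sum_sub_distrib, ← Finset.mul_sum]
  -- complex exp to real
  have habs1 : ‖Complex.exp (-(nsq (u-v) : ℂ)) -
      Complex.exp (-(a : ℂ) - (b : ℂ))‖ =
      Real.exp (-a-b) * |Real.exp (2*s) - 1| := by
    have e1 : Complex.exp (-(nsq (u-v) : ℂ)) = ((Real.exp (-(nsq (u-v)))) : ℂ) := by
      rw [← Complex.ofReal_neg, Complex.ofReal_exp]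
    have e2 : Complex.exp (-(a : ℂ) - (b : ℂ)) = ((Real.exp (-a-b)) : ℂ) := by
      rw [show -(a:ℂ) - (b:ℂ) = ((-a-b : ℝ) : ℂ) by push_cast; ring, Complex.ofReal_exp]
    rw [e1, e2, ← Complex.ofReal_sub, Complex.norm_real, Real.norm_eq_abs]
    rw [hpar]
    rw [show -(a - 2*s + b) = (-a-b) + 2*s by ring, Real.exp_add]
    rw [show Real.exp (-a-b) * Real.exp (2*s) - Real.exp (-a-b)
      = Real.exp (-a-b) * (Real.exp (2*s) - 1) by ring, abs_mul,
      abs_of_pos (Real.exp_pos _)]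
  by_cases hs : s ≠ 0
  · rw [if_pos hs]
    rw [norm_div, norm_mul, habs1, Complex.norm_real, Real.norm_eq_abs]
    have := key1 ha hb hs hCS
    calc Real.exp (-a-b) * |Real.exp (2*s) - 1| *
        ‖pairC u (K.mulVec fun i => ((v i : ℂ)))‖ / |s|
        ≤ Real.exp (-a-b) * |Real.exp (2*s) - 1| * (Real.sqrt a * Real.sqrt b) / |s| := by
          gcongr
      _ ≤ 1 := this
  · rw [if_neg hs]
    rw [norm_mul]
    have e2 : Complex.exp (-(a : ℂ) - (b : ℂ)) = ((Real.exp (-a-b)) : ℂ) := by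
      rw [show -(a:ℂ) - (b:ℂ) = ((-a-b : ℝ) : ℂ) by push_cast; ring, Complex.ofReal_exp]
    rw [e2, Complex.norm_real, Real.norm_eq_abs, abs_of_pos (Real.exp_pos _)]
    calc Real.exp (-a-b) * ‖pairC u (K.mulVec fun i => ((v i : ℂ)))‖
        ≤ Real.exp (-a-b) * (Real.sqrt a * Real.sqrt b) :=
          mul_le_mul_of_nonneg_left hP (Real.exp_pos _).le
      _ ≤ 1 := key2 ha hb
end
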